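/- In the tensor product model M of L_n ⊗ V_0, for every 0 ≤ i ≤ n and k ≥ 0, setting c = (n−2i−2k)(n−2i−2k+2), the shifted Casimir operator satisfies (Ω − c)(v_i ⊗ w_k) = 4·(i(n−i+1) − k(k−1))·(v_i ⊗ w_k) − 4k(k−1)(i+1)·(v_{i+1} ⊗ w_{k−1}) + 4(n−i+1)·(v_{i−1} ⊗ w_{k+1}). -/
import Mathlib


/-- The tensor product model `M` of `L_n ⊗ V_0`: finitely supported functions on
`{0,…,n} × ℕ`, with standard basis vectors `v_i ⊗ w_k`. -/
abbrev TM (n : ℕ) : Type := (Fin (n + 1) × ℕ) →₀ ℂ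

/-- The basis vector `v_i ⊗ w_k` of `M`, with the convention that it is `0`
whenever `i < 0`, `i > n` or `k < 0`. -/
noncomputable def bv (n : ℕ) (i k : ℤ) : TM n :=
  if h : 0 ≤ i ∧ i < (n : ℤ) + 1 ∧ 0 ≤ k then
    Finsupp.single (⟨i.toNat, by omega⟩, k.toNat) (1 : ℂ)
  else 0

/-- The coefficient of `v_i ⊗ w_k` in `u`, interpreted as `0` for out-of-range
indices. -/
noncomputable def cf (n : ℕ) (u : TM n) (i k : ℤ) : ℂ :=
  if h : 0 ≤ i ∧ i < (n : ℤ) + 1 ∧ 0 ≤ k then u (⟨i.toNat, by omega⟩, k.toNat) else 0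

/-- `F(v_i ⊗ w_k) = (i+1)·v_{i+1} ⊗ w_k + v_i ⊗ w_{k+1}`. -/
noncomputable def FM (n : ℕ) : Module.End ℂ (TM n) :=
  Finsupp.lsum ℂ fun p => LinearMap.toSpanSingleton ℂ (TM n)
    ((((p.1 : ℕ) : ℂ) + 1) • bv n (((p.1 : ℕ) : ℤ) + 1) ((p.2 : ℤ)) +
      bv n ((p.1 : ℕ) : ℤ) ((p.2 : ℤ) + 1))

/-- `E(v_i ⊗ w_k) = (n-i+1)·v_{i-1} ⊗ w_k - k(k-1)·v_i ⊗ w_{k-1}`. -/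
noncomputable def EM (n : ℕ) : Module.End ℂ (TM n) :=
  Finsupp.lsum ℂ fun p => LinearMap.toSpanSingleton ℂ (TM n)
    (((n : ℂ) - ((p.1 : ℕ) : ℂ) + 1) • bv n (((p.1 : ℕ) : ℤ) - 1) ((p.2 : ℤ)) -
      (((p.2 : ℕ) : ℂ) * (((p.2 : ℕ) : ℂ) - 1)) • bv n ((p.1 : ℕ) : ℤ) ((p.2 : ℤ) - 1))

/-- `H(v_i ⊗ w_k) = (n-2i-2k)·v_i ⊗ w_k`. -/
noncomputable def HM (n : ℕ) : Module.End ℂ (TM n) :=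
  Finsupp.lsum ℂ fun p => LinearMap.toSpanSingleton ℂ (TM n)
    (((n : ℂ) - 2 * ((p.1 : ℕ) : ℂ) - 2 * ((p.2 : ℕ) : ℂ)) • bv n ((p.1 : ℕ) : ℤ) ((p.2 : ℤ)))

/-- The Casimir operator `Ω = H² + 2H + 4FE` on `M`. -/
noncomputable def CasM (n : ℕ) : Module.End ℂ (TM n) :=
  HM n * HM n + (2 : ℂ) • HM n + (4 : ℂ) • (FM n * EM n)

lemma bv_nat (n i k : ℕ) (hi : i ≤ n) :
    bv n (i : ℤ) (k : ℤ) = Finsupp.single (⟨i, by omega⟩, k) 1 := by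
  rw [bv, dif_pos]
  · simp
  · refine ⟨by positivity, by exact_mod_cast by omega, by positivity⟩

lemma bv_neg (n : ℕ) (i k : ℤ) (h : ¬ (0 ≤ i ∧ i < (n:ℤ)+1 ∧ 0 ≤ k)) : bv n i k = 0 := by
  rw [bv, dif_neg h]

lemma FM_bv (n i k : ℕ) (hi : i ≤ n) :
    FM n (bv n (i : ℤ) (k : ℤ)) =
      ((i : ℂ) + 1) • bv n ((i : ℤ) + 1) (k : ℤ) + bv n (i : ℤ) ((k : ℤ) + 1) := by
  rw [bv_nat n i k hi, FM, Finsupp.lsum_single, LinearMap.toSpanSingleton_apply, one_smul]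

lemma EM_bv (n i k : ℕ) (hi : i ≤ n) :
    EM n (bv n (i : ℤ) (k : ℤ)) =
      ((n : ℂ) - (i : ℂ) + 1) • bv n ((i : ℤ) - 1) (k : ℤ) -
        ((k : ℂ) * ((k : ℂ) - 1)) • bv n (i : ℤ) ((k : ℤ) - 1) := by
  rw [bv_nat n i k hi, EM, Finsupp.lsum_single, LinearMap.toSpanSingleton_apply, one_smul]

lemma HM_bv (n i k : ℕ) (hi : i ≤ n) :
    HM n (bv n (i : ℤ) (k : ℤ)) =
      ((n : ℂ) - 2 * (i : ℂ) - 2 * (k : ℂ)) • bv n (i : ℤ) (k : ℤ) := by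
  rw [bv_nat n i k hi, HM, Finsupp.lsum_single, LinearMap.toSpanSingleton_apply, one_smul]
  simp [bv_nat n i k hi]

lemma FM_bv' (n i k : ℕ) (hi : i ≤ n) :
    FM n (bv n ((i : ℤ) - 1) (k : ℤ)) =
      (i : ℂ) • bv n (i : ℤ) (k : ℤ) + bv n ((i : ℤ) - 1) ((k : ℤ) + 1) := by
  cases i with
  | zero =>
      have h0 : ((0:ℕ):ℤ) - 1 = -1 := by norm_num
      rw [h0, bv_neg n (-1) k (by omega), bv_neg n (-1) ((k:ℤ)+1) (by omega)]
      simp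
  | succ j =>
      have h1 : ((j : ℤ) + 1) - 1 = (j : ℤ) := by ring
      push_cast [h1]
      rw [FM_bv n j k (by omega)]

lemma kk_FM (n i k : ℕ) (hi : i ≤ n) :
    ((k : ℂ) * ((k : ℂ) - 1)) • FM n (bv n (i : ℤ) ((k : ℤ) - 1)) =
      ((k : ℂ) * ((k : ℂ) - 1)) •
        (((i : ℂ) + 1) • bv n ((i : ℤ) + 1) ((k : ℤ) - 1) + bv n (i : ℤ) (k : ℤ)) := by
  cases k with
  | zero => simp
  | succ j =>
      have h1 : ((j : ℤ) + 1) - 1 = (j : ℤ) := by ring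
      push_cast [h1]
      rw [FM_bv n i j hi]

/-- For every `0 ≤ i ≤ n` and `k ≥ 0`, setting `c = (n-2i-2k)(n-2i-2k+2)`,
the shifted Casimir operator satisfies
`(Ω - c)(v_i ⊗ w_k) = 4(i(n-i+1) - k(k-1))·(v_i ⊗ w_k)
  - 4k(k-1)(i+1)·(v_{i+1} ⊗ w_{k-1}) + 4(n-i+1)·(v_{i-1} ⊗ w_{k+1})`. -/
theorem stmt13 (n : ℕ) (i k : ℕ) (hi : i ≤ n) :
    (CasM n -
        (((n : ℂ) - 2 * (i : ℂ) - 2 * (k : ℂ)) *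
          ((n : ℂ) - 2 * (i : ℂ) - 2 * (k : ℂ) + 2)) • (1 : Module.End ℂ (TM n)))
        (bv n (i : ℤ) (k : ℤ)) =
      (4 * ((i : ℂ) * ((n : ℂ) - (i : ℂ) + 1) - (k : ℂ) * ((k : ℂ) - 1))) •
          bv n (i : ℤ) (k : ℤ) -
        (4 * (k : ℂ) * ((k : ℂ) - 1) * ((i : ℂ) + 1)) • bv n ((i : ℤ) + 1) ((k : ℤ) - 1) +
        (4 * ((n : ℂ) - (i : ℂ) + 1)) • bv n ((i : ℤ) - 1) ((k : ℤ) + 1) := by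
  simp only [CasM, LinearMap.sub_apply, LinearMap.add_apply, LinearMap.smul_apply,
    Module.End.mul_apply, Module.End.one_apply]
  rw [HM_bv n i k hi, map_smul, HM_bv n i k hi, EM_bv n i k hi, map_sub, map_smul, map_smul,
    FM_bv' n i k hi]
  rw [kk_FM n i k hi]
  module
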